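/- arXiv:1805.06936 — 2 statements merged into one kernel-verified Lean document; each statement's English description precedes it below -/
import Mathlib

section
/- For every integer n ≥ 1, every t > 0, every M > 0, and all ξ₁, …, ξ_n ∈ ℝ, the iterated integral over the simplex satisfies ∫_{0<t₁<⋯<t_n<t} ∏_{j=1}^{n} S(t_{j+1} − t_j, ξ_j) dt₁ ⋯ dt_n ≤ e^{Mt} (2/M)ⁿ ∏_{j=1}^{n} 1/(M² + 4 ξ_j²), where the convention t_{n+1} = t is used. -/
open MeasureTheory
open scoped ENNReal BigOperators

/-- `S(u,ξ) = sin²(uξ)/ξ²` for `ξ ≠ 0`, `S(u,0) = u²`. -/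
noncomputable def waveS (u ξ : ℝ) : ℝ :=
  if ξ = 0 then u ^ 2 else Real.sin (u * ξ) ^ 2 / ξ ^ 2

/-- The open simplex `{0 < t₁ < ⋯ < t_n < t}` in `ℝⁿ`. -/
def simplex (n : ℕ) (t : ℝ) : Set (Fin n → ℝ) :=
  {u | (∀ i, 0 < u i ∧ u i < t) ∧ ∀ i j : Fin n, i < j → u i < u j}

/-- `t_{j+1}`, with the convention `t_{n+1} = t`. -/
noncomputable def nextVal {n : ℕ} (t : ℝ) (u : Fin n → ℝ) (j : Fin n) : ℝ :=
  if h : (j : ℕ) + 1 < n then u ⟨(j : ℕ) + 1, h⟩ else t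

open Set Real

/-! The increments `s_j = t_{j+1} - t_j` of a point of the simplex are positive with sum at most
`t`, and `u ↦ s` is an affine map with determinant `±1`. Inserting `1 ≤ e^{M (t - ∑ s_j)}` and
changing variables therefore bounds the integral by `e^{Mt}` times the integral over the orthant
`(0, ∞)ⁿ` of `∏ e^{-M s_j} S(s_j, ξ_j)`. This factorizes into Laplace transforms
`∫₀^∞ e^{-Ms} S(s, ξ) ds = (2/M) / (M² + 4ξ²)`, computed from `sin² = (1 - cos 2·)/2` and the
real part of `∫₀^∞ e^{(-M + ib)s} ds = 1/(M - ib)`. -/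

lemma waveS_nonneg (u ξ : ℝ) : 0 ≤ waveS u ξ := by
  unfold waveS; split_ifs <;> positivity

lemma waveS_of_ne_zero {ξ : ℝ} (hξ : ξ ≠ 0) (u : ℝ) :
    waveS u ξ = (1 - cos (2 * ξ * u)) / (2 * ξ ^ 2) := by
  rw [waveS, if_neg hξ, sin_sq_eq_half_sub, mul_comm u ξ, ← mul_assoc]
  field_simp

lemma exp_neg_mul_mul_cos_eq_re (M b s : ℝ) :
    exp (-(M * s)) * cos (b * s) = (Complex.exp ((-M + b * Complex.I) * s)).re := by
  rw [Complex.exp_re]; simp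

lemma integrableOn_exp_neg_mul_mul_cos {M : ℝ} (hM : 0 < M) (b : ℝ) :
    IntegrableOn (fun s => exp (-(M * s)) * cos (b * s)) (Ioi 0) := by
  simp_rw [exp_neg_mul_mul_cos_eq_re]
  exact (integrableOn_exp_mul_complex_Ioi (by simpa using hM) 0).re

lemma integral_exp_neg_mul_mul_cos {M : ℝ} (hM : 0 < M) (b : ℝ) :
    ∫ s in Ioi 0, exp (-(M * s)) * cos (b * s) = M / (M ^ 2 + b ^ 2) := by
  simp_rw [exp_neg_mul_mul_cos_eq_re]
  have ha : (-M + b * Complex.I).re < 0 := by simpa using hM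
  rw [← RCLike.re_eq_complex_re, integral_re (integrableOn_exp_mul_complex_Ioi ha 0),
    integral_exp_mul_complex_Ioi ha]
  simp [Complex.div_re, Complex.normSq]
  field_simp

lemma integral_exp_neg_mul_mul_waveS {M : ℝ} (hM : 0 < M) (ξ : ℝ) :
    ∫ s in Ioi 0, exp (-(M * s)) * waveS s ξ = 2 / M * (1 / (M ^ 2 + 4 * ξ ^ 2)) := by
  by_cases hξ : ξ = 0
  · subst hξ
    calc ∫ s in Ioi 0, exp (-(M * s)) * waveS s 0
        = ∫ s in Ioi 0, s ^ ((3 : ℝ) - 1) * exp (-(M * s)) :=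
          setIntegral_congr_fun measurableSet_Ioi fun s _ => by norm_num [waveS, mul_comm]
      _ = (1 / M) ^ (3 : ℝ) * Gamma 3 := integral_rpow_mul_exp_neg_mul_Ioi (by norm_num) hM
      _ = 2 / M * (1 / (M ^ 2 + 4 * 0 ^ 2)) := by
          rw [show (3 : ℝ) = (2 : ℕ) + 1 by norm_num, Gamma_nat_eq_factorial]
          norm_num
          field_simp
  · have h : ∀ s, exp (-(M * s)) * waveS s ξ =
        (exp (-(M * s)) * cos (0 * s) - exp (-(M * s)) * cos (2 * ξ * s)) / (2 * ξ ^ 2) := by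
      intro s
      rw [waveS_of_ne_zero hξ, zero_mul, cos_zero]
      ring
    simp_rw [h]
    rw [integral_div, integral_sub (integrableOn_exp_neg_mul_mul_cos hM 0)
      (integrableOn_exp_neg_mul_mul_cos hM _), integral_exp_neg_mul_mul_cos hM,
      integral_exp_neg_mul_mul_cos hM]
    field_simp
    ring

noncomputable def dampedWaveS (M ξ : ℝ) : ℝ → ℝ :=
  (Ioi 0).indicator fun s => exp (-(M * s)) * waveS s ξ

lemma integral_dampedWaveS {M : ℝ} (hM : 0 < M) (ξ : ℝ) :
    ∫ s, dampedWaveS M ξ s = 2 / M * (1 / (M ^ 2 + 4 * ξ ^ 2)) := by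
  rw [dampedWaveS, integral_indicator measurableSet_Ioi, integral_exp_neg_mul_mul_waveS hM]

lemma integrable_dampedWaveS {M : ℝ} (hM : 0 < M) (ξ : ℝ) : Integrable (dampedWaveS M ξ) :=
  .of_integral_ne_zero <| by rw [integral_dampedWaveS hM]; positivity

lemma dampedWaveS_nonneg (M ξ s : ℝ) : 0 ≤ dampedWaveS M ξ s :=
  Set.indicator_nonneg (fun s _ => mul_nonneg (exp_nonneg _) (waveS_nonneg s ξ)) s

noncomputable def incrementsLinearMap (n : ℕ) : (Fin n → ℝ) →ₗ[ℝ] Fin n → ℝ :=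
  LinearMap.pi fun j =>
    (if h : (j : ℕ) + 1 < n then LinearMap.proj ⟨(j : ℕ) + 1, h⟩ else 0) - LinearMap.proj j

lemma incrementsLinearMap_apply {n : ℕ} (u : Fin n → ℝ) (j : Fin n) :
    incrementsLinearMap n u j =
      (if h : (j : ℕ) + 1 < n then u ⟨(j : ℕ) + 1, h⟩ else 0) - u j := by
  by_cases h : (j : ℕ) + 1 < n <;> simp [incrementsLinearMap, h]

lemma det_incrementsLinearMap (n : ℕ) : LinearMap.det (incrementsLinearMap n) = (-1) ^ n := by
  rw [← LinearMap.det_toMatrix', Matrix.det_of_isUpperTriangular]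
  · simp [LinearMap.toMatrix'_apply, incrementsLinearMap_apply, Fin.ext_iff]
  · intro i j (hji : (j : ℕ) < i)
    simp [LinearMap.toMatrix'_apply, incrementsLinearMap_apply, Fin.ext_iff,
      show (i : ℕ) + 1 ≠ j by omega, show (i : ℕ) ≠ j by omega]

lemma measurePreserving_of_abs_det_eq_one {ι : Type*} [Fintype ι]
    (f : (ι → ℝ) →ₗ[ℝ] ι → ℝ) (hf : |LinearMap.det f| = 1) : MeasurePreserving f volume volume := by
  have hf0 : LinearMap.det f ≠ 0 := by intro h; simp [h] at hf
  refine ⟨f.continuous_of_finiteDimensional.measurable, ?_⟩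
  rw [Real.map_linearMap_volume_pi_eq_smul_volume_pi hf0, abs_inv, hf]
  simp

lemma measurableEmbedding_of_det_ne_zero {ι : Type*} [Fintype ι]
    (f : (ι → ℝ) →ₗ[ℝ] ι → ℝ) (hf : LinearMap.det f ≠ 0) : MeasurableEmbedding f :=
  (f.equivOfDetNeZero hf).toContinuousLinearEquiv.toHomeomorph.measurableEmbedding

lemma nextVal_sub_eq_comp_incrementsLinearMap (n : ℕ) (t : ℝ) :
    (fun u : Fin n → ℝ => fun j => nextVal t u j - u j) =
      (· + nextVal t 0) ∘ incrementsLinearMap n := by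
  ext u j
  by_cases h : (j : ℕ) + 1 < n <;> simp [nextVal, incrementsLinearMap_apply, h, sub_eq_neg_add]

lemma measurePreserving_nextVal_sub (n : ℕ) (t : ℝ) :
    MeasurePreserving (fun u : Fin n → ℝ => fun j => nextVal t u j - u j) volume volume := by
  rw [nextVal_sub_eq_comp_incrementsLinearMap]
  exact (measurePreserving_add_right volume _).comp
    (measurePreserving_of_abs_det_eq_one _ (by simp [det_incrementsLinearMap]))

lemma measurableEmbedding_nextVal_sub (n : ℕ) (t : ℝ) :
    MeasurableEmbedding fun u : Fin n → ℝ => fun j => nextVal t u j - u j := by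
  rw [nextVal_sub_eq_comp_incrementsLinearMap]
  exact (Homeomorph.addRight _).measurableEmbedding.comp
    (measurableEmbedding_of_det_ne_zero _ (by simp [det_incrementsLinearMap]))

lemma measurableSet_simplex (n : ℕ) (t : ℝ) : MeasurableSet (simplex n t) := by
  simp only [simplex, ofPred_and, ofPred_forall]
  measurability

lemma nextVal_sub_pos_of_mem_simplex {n : ℕ} {t : ℝ} {u : Fin n → ℝ}
    (hu : u ∈ simplex n t) (j : Fin n) : 0 < nextVal t u j - u j := by
  rw [sub_pos, nextVal]
  split_ifs with h
  · exact hu.2 _ _ (Fin.lt_def.2 (Nat.lt_succ_self _))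
  · exact (hu.1 j).2

lemma sum_nextVal_sub {n : ℕ} (hn : 0 < n) (t : ℝ) (u : Fin n → ℝ) :
    ∑ j, (nextVal t u j - u j) = t - u ⟨0, hn⟩ := by
  let w : ℕ → ℝ := fun k => if h : k < n then u ⟨k, h⟩ else t
  calc ∑ j, (nextVal t u j - u j) = ∑ k ∈ Finset.range n, (w (k + 1) - w k) :=
        Fin.sum_univ_eq_sum_range (fun k => w (k + 1) - w k) n ▸
          Finset.sum_congr rfl fun j _ => by simp [w, nextVal]
    _ = t - u ⟨0, hn⟩ := by rw [Finset.sum_range_sub]; simp [w, hn]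

lemma sum_nextVal_sub_le_of_mem_simplex {n : ℕ} (hn : 0 < n) {t : ℝ} {u : Fin n → ℝ}
    (hu : u ∈ simplex n t) : ∑ j, (nextVal t u j - u j) ≤ t := by
  rw [sum_nextVal_sub hn]
  linarith [(hu.1 ⟨0, hn⟩).1]

lemma prod_waveS_le_exp_mul_prod_dampedWaveS {ι : Type*} [Fintype ι] {M t : ℝ} (hM : 0 ≤ M)
    {v : ι → ℝ} (hv : ∀ j, 0 < v j) (hsum : ∑ j, v j ≤ t) (ξ : ι → ℝ) :
    ∏ j, waveS (v j) (ξ j) ≤ exp (M * t) * ∏ j, dampedWaveS M (ξ j) (v j) := by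
  have hdamped : ∏ j, dampedWaveS M (ξ j) (v j) =
      exp (-(M * ∑ j, v j)) * ∏ j, waveS (v j) (ξ j) := by
    simp [dampedWaveS, indicator_of_mem, hv, Finset.prod_mul_distrib, Finset.mul_sum, ← exp_sum]
  rw [hdamped, ← mul_assoc, ← exp_add]
  exact le_mul_of_one_le_left (Finset.prod_nonneg fun j _ => waveS_nonneg _ _)
    (one_le_exp (by nlinarith))

theorem stmt5_general (n : ℕ) (hn : 1 ≤ n) (t : ℝ) (M : ℝ) (hM : 0 < M)
    (ξ : Fin n → ℝ) :
    (∫ u in simplex n t, ∏ j : Fin n, waveS (nextVal t u j - u j) (ξ j)) ≤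
      Real.exp (M * t) * (2 / M) ^ n * ∏ j : Fin n, 1 / (M ^ 2 + 4 * ξ j ^ 2) := by
  set T := fun u : Fin n → ℝ => fun j => nextVal t u j - u j
  have hT := measurePreserving_nextVal_sub n t
  have hTemb := measurableEmbedding_nextVal_sub n t
  set g := fun v : Fin n → ℝ => ∏ j, dampedWaveS M (ξ j) (v j)
  have hg : Integrable g := .fintype_prod fun j => integrable_dampedWaveS hM (ξ j)
  have hg0 (v : Fin n → ℝ) : 0 ≤ g v :=
    Finset.prod_nonneg fun j _ => dampedWaveS_nonneg M (ξ j) (v j)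
  have hgT : Integrable (g ∘ T) := (hT.integrable_comp_emb hTemb).2 hg
  calc ∫ u in simplex n t, ∏ j, waveS (T u j) (ξ j)
      ≤ ∫ u in simplex n t, exp (M * t) * g (T u) :=
        integral_mono_of_nonneg
          (.of_forall fun u => Finset.prod_nonneg fun j _ => waveS_nonneg _ _)
          (hgT.const_mul _).integrableOn
          (ae_restrict_of_forall_mem (measurableSet_simplex n t) fun u hu =>
            prod_waveS_le_exp_mul_prod_dampedWaveS hM.le (nextVal_sub_pos_of_mem_simplex hu)
              (sum_nextVal_sub_le_of_mem_simplex hn hu) ξ)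
    _ = exp (M * t) * ∫ u in simplex n t, g (T u) := integral_const_mul _ _
    _ ≤ exp (M * t) * ∫ u, g (T u) :=
        mul_le_mul_of_nonneg_left (setIntegral_le_integral hgT (.of_forall fun u => hg0 (T u)))
          (exp_nonneg _)
    _ = exp (M * t) * ∏ j, (2 / M * (1 / (M ^ 2 + 4 * ξ j ^ 2))) := by
        rw [hT.integral_comp hTemb, integral_fintype_prod_volume_eq_prod]
        simp_rw [integral_dampedWaveS hM]
    _ = exp (M * t) * (2 / M) ^ n * ∏ j, 1 / (M ^ 2 + 4 * ξ j ^ 2) := by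
        rw [Finset.prod_mul_distrib, Finset.prod_const, Finset.card_univ, Fintype.card_fin,
          mul_assoc]

theorem stmt5 (n : ℕ) (hn : 1 ≤ n) (t : ℝ) (ht : 0 < t) (M : ℝ) (hM : 0 < M)
    (ξ : Fin n → ℝ) :
    (∫ u in simplex n t, ∏ j : Fin n, waveS (nextVal t u j - u j) (ξ j)) ≤
      Real.exp (M * t) * (2 / M) ^ n * ∏ j : Fin n, 1 / (M ^ 2 + 4 * ξ j ^ 2) :=
  stmt5_general n hn t M hM ξ
end

section
/- Let γ: ℝ → [0,∞] be measurable, symmetric (γ(−s) = γ(s)) and locally integrable, and set Γ_t = 2∫₀ᵗ γ(s) ds. Let μ be a Borel measure on ℝ satisfying Dalang's condition ∫_ℝ 1/(1+ξ²) μ(dξ) < ∞. For s ≥ 0 let h_s(ξ) = sin(sξ)/ξ (with h_s(0) = s), so that h_s ∈ L²(μ). Then for every t > 0, φ(t) := ∫₀ᵗ∫₀ᵗ γ(s−s′) ( ∫_ℝ h_s(ξ) h_{s′}(ξ) μ(dξ) ) ds ds′ ≤ Γ_t · ∫₀ᵗ ( ∫_ℝ h_s(ξ)² μ(dξ) ) ds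 =: Γ_t · ψ₀(t). (This is the paper's Lemma 6.4, φ(t) ≤ Γ_t ψ₀(t), in spectral form.) -/
open MeasureTheory
open scoped ENNReal

/-- `h_s(ξ) = sin(sξ)/ξ` (with `h_s(0) = s`): the Fourier transform of the
one-dimensional wave kernel `G(s,x) = (1/2)·1_{|x|<s}`. -/
noncomputable def waveH (s ξ : ℝ) : ℝ :=
  if ξ = 0 then s else Real.sin (s * ξ) / ξ

/-!
Since `|sin x| ≤ min 1 |x|`, one has `h_s(ξ)² (1 + ξ²) ≤ 1 + s²`, so Dalang's condition puts every
`h_s` in `L²(μ)` and, by dominated convergence, makes `ψ(s) = ∫ h_s² dμ` continuous in `s`.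
By AM-GM, `|∫ h_s h_{s'} dμ| ≤ (ψ(s) + ψ(s')) / 2`. As `γ` is even, the two halves contribute
equally to the double integral, and `∫₀ᵗ γ(s - s') ds' ≤ ∫_{-t}^t γ = Γ_t` for every `s ∈ [0, t]`.
Estimating the `ℝ≥0∞`-valued iterated integral of the norms avoids any integrability question
about the double integral itself.
-/

open Set

lemma abs_integral_mul_le_half_add {α : Type*} [MeasurableSpace α] {μ : Measure α} {f g : α → ℝ}
    (hf : MemLp f 2 μ) (hg : MemLp g 2 μ) :
    |∫ x, f x * g x ∂μ| ≤ (∫ x, f x ^ 2 ∂μ + ∫ x, g x ^ 2 ∂μ) / 2 := by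
  have hf2 := hf.integrable_sq
  have hg2 := hg.integrable_sq
  calc |∫ x, f x * g x ∂μ| ≤ ∫ x, |f x * g x| ∂μ := abs_integral_le_integral_abs
    _ ≤ ∫ x, (f x ^ 2 + g x ^ 2) / 2 ∂μ := by
        refine integral_mono (hf.integrable_mul hg).abs ((hf2.add hg2).div_const 2) fun x => ?_
        have := two_mul_le_add_sq |f x| |g x|
        rw [sq_abs, sq_abs] at this
        rw [abs_mul]
        linarith
    _ = (∫ x, f x ^ 2 ∂μ + ∫ x, g x ^ 2 ∂μ) / 2 := by
        rw [integral_div, integral_add hf2 hg2]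

lemma enorm_toReal_mul_le {x : ℝ≥0∞} {r c : ℝ} (h : |r| ≤ c) :
    ‖x.toReal * r‖ₑ ≤ x * ENNReal.ofReal c := by
  rw [enorm_mul, Real.enorm_of_nonneg ENNReal.toReal_nonneg, Real.enorm_eq_ofReal_abs]
  exact mul_le_mul' ENNReal.ofReal_toReal_le (ENNReal.ofReal_le_ofReal h)

lemma ofReal_add_div_two {a b : ℝ} (ha : 0 ≤ a) (hb : 0 ≤ b) :
    ENNReal.ofReal ((a + b) / 2) = (ENNReal.ofReal a + ENNReal.ofReal b) / 2 := by
  rw [ENNReal.ofReal_div_of_pos two_pos, ENNReal.ofReal_add ha hb, ENNReal.ofReal_ofNat]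

lemma measurable_waveH (s : ℝ) : Measurable (waveH s) := by
  unfold waveH
  exact Measurable.ite (measurableSet_eq_fun measurable_id measurable_const) measurable_const
    (by fun_prop)

lemma continuous_waveH_left (ξ : ℝ) : Continuous fun s => waveH s ξ := by
  unfold waveH
  split_ifs
  · exact continuous_id
  · fun_prop

lemma waveH_sq_mul_le (s ξ : ℝ) : waveH s ξ ^ 2 * (1 + ξ ^ 2) ≤ 1 + s ^ 2 := by
  unfold waveH
  split_ifs with hξ
  · simp [hξ]
  · have hsin : Real.sin (s * ξ) ^ 2 / ξ ^ 2 ≤ s ^ 2 := by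
      rw [div_le_iff₀ (by positivity), ← mul_pow]
      exact Real.sin_sq_le_sq
    calc (Real.sin (s * ξ) / ξ) ^ 2 * (1 + ξ ^ 2)
        = Real.sin (s * ξ) ^ 2 / ξ ^ 2 + Real.sin (s * ξ) ^ 2 := by field_simp
      _ ≤ s ^ 2 + 1 := add_le_add hsin (Real.sin_sq_le_one _)
      _ = 1 + s ^ 2 := add_comm _ _

lemma waveH_sq_le (s ξ : ℝ) : waveH s ξ ^ 2 ≤ (1 + s ^ 2) * (1 / (1 + ξ ^ 2)) := by
  rw [mul_one_div, le_div_iff₀ (by positivity)]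
  exact waveH_sq_mul_le s ξ

section Dalang

variable {μ : Measure ℝ}

lemma integrable_one_div_one_add_sq (hD : ∫⁻ ξ, ENNReal.ofReal (1 / (1 + ξ ^ 2)) ∂μ < ⊤) :
    Integrable (fun ξ : ℝ => 1 / (1 + ξ ^ 2)) μ :=
  ⟨(by fun_prop : Measurable fun ξ : ℝ => 1 / (1 + ξ ^ 2)).aestronglyMeasurable,
    (hasFiniteIntegral_iff_ofReal (.of_forall fun ξ => by positivity)).2 hD⟩

lemma integrable_waveH_sq (hD : ∫⁻ ξ, ENNReal.ofReal (1 / (1 + ξ ^ 2)) ∂μ < ⊤) (s : ℝ) :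
    Integrable (fun ξ => waveH s ξ ^ 2) μ :=
  ((integrable_one_div_one_add_sq hD).const_mul (1 + s ^ 2)).mono'
    ((measurable_waveH s).pow_const 2).aestronglyMeasurable
    (.of_forall fun ξ => by simpa using waveH_sq_le s ξ)

lemma memLp_waveH (hD : ∫⁻ ξ, ENNReal.ofReal (1 / (1 + ξ ^ 2)) ∂μ < ⊤) (s : ℝ) :
    MemLp (waveH s) 2 μ :=
  (memLp_two_iff_integrable_sq (measurable_waveH s).aestronglyMeasurable).2
    (integrable_waveH_sq hD s)

lemma continuous_integral_waveH_sq (hD : ∫⁻ ξ, ENNReal.ofReal (1 / (1 + ξ ^ 2)) ∂μ < ⊤) :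
    Continuous fun s => ∫ ξ, waveH s ξ ^ 2 ∂μ := by
  refine continuous_iff_continuousAt.2 fun s₀ => ?_
  have hnear : ∀ᶠ s in nhds s₀, s ^ 2 < s₀ ^ 2 + 1 :=
    (continuous_pow 2).continuousAt.eventually_lt continuousAt_const (lt_add_one _)
  refine continuousAt_of_dominated (bound := fun ξ => (2 + s₀ ^ 2) * (1 / (1 + ξ ^ 2)))
    (.of_forall fun s => ((measurable_waveH s).pow_const 2).aestronglyMeasurable) ?_
    ((integrable_one_div_one_add_sq hD).const_mul _)
    (.of_forall fun ξ => ((continuous_waveH_left ξ).pow 2).continuousAt)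
  filter_upwards [hnear] with s hs
  refine .of_forall fun ξ => ?_
  rw [Real.norm_of_nonneg (sq_nonneg _)]
  exact (waveH_sq_le s ξ).trans (mul_le_mul_of_nonneg_right (by linarith) (by positivity))

end Dalang

section Kernel

variable {γ : ℝ → ℝ≥0∞}

lemma setLIntegral_Ioc_comp_sub_le {t a : ℝ} (ha : 0 ≤ a) (hat : a ≤ t) :
    ∫⁻ s in Ioc 0 t, γ (a - s) ≤ ∫⁻ u in Icc (-t) t, γ u :=
  calc ∫⁻ s in Ioc 0 t, γ (a - s) ≤ ∫⁻ s in Icc 0 t, γ (a - s) :=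
        lintegral_mono_set Ioc_subset_Icc_self
    _ = ∫⁻ u in (a - ·) '' Icc 0 t, γ u :=
        (Measure.measurePreserving_sub_left volume a).setLIntegral_comp_emb
          (MeasurableEquiv.subLeft a).measurableEmbedding γ _
    _ ≤ ∫⁻ u in Icc (-t) t, γ u := by
        refine lintegral_mono_set ?_
        rw [image_const_sub_Icc]
        exact Icc_subset_Icc (by linarith) (by linarith)

lemma setLIntegral_Icc_neg_eq_two_mul (hγs : ∀ s, γ (-s) = γ s) {t : ℝ} (ht : 0 ≤ t) :
    ∫⁻ u in Icc (-t) t, γ u = 2 * ∫⁻ u in Ioc 0 t, γ u := by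
  have hneg : ∫⁻ u in Icc (-t) 0, γ u = ∫⁻ u in Icc 0 t, γ u := by
    have := (Measure.measurePreserving_neg (volume : Measure ℝ)).setLIntegral_comp_emb
      (MeasurableEquiv.neg ℝ).measurableEmbedding γ (Icc 0 t)
    simpa [hγs, image_neg_eq_neg] using this.symm
  rw [← Icc_union_Ioc_eq_Icc (neg_nonpos.2 ht) ht,
    lintegral_union measurableSet_Ioc ((Iic_disjoint_Ioc le_rfl).mono_left Icc_subset_Iic_self),
    hneg, setLIntegral_congr Ioc_ae_eq_Icc.symm, two_mul]

lemma setLIntegral_Ioc_mul_add_div_two_le (hγm : Measurable γ) (hγs : ∀ s, γ (-s) = γ s)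
    {F : ℝ → ℝ≥0∞} (hF : Measurable F) (t : ℝ) :
    ∫⁻ s in Ioc 0 t, ∫⁻ s' in Ioc 0 t, γ (s - s') * ((F s + F s') / 2) ≤
      (∫⁻ u in Icc (-t) t, γ u) * ∫⁻ s in Ioc 0 t, F s := by
  have hγsub : ∀ s, Measurable fun s' => γ (s - s') := fun s => by fun_prop
  have hswap : ∫⁻ s in Ioc 0 t, ∫⁻ s' in Ioc 0 t, γ (s - s') * F s' =
      ∫⁻ s in Ioc 0 t, ∫⁻ s' in Ioc 0 t, γ (s - s') * F s := by
    rw [lintegral_lintegral_swap (by fun_prop)]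
    refine lintegral_congr fun s => lintegral_congr fun s' => ?_
    rw [← neg_sub, hγs]
  have hA : ∫⁻ s in Ioc 0 t, ∫⁻ s' in Ioc 0 t, γ (s - s') * F s ≤
      (∫⁻ u in Icc (-t) t, γ u) * ∫⁻ s in Ioc 0 t, F s :=
    calc ∫⁻ s in Ioc 0 t, ∫⁻ s' in Ioc 0 t, γ (s - s') * F s
        = ∫⁻ s in Ioc 0 t, (∫⁻ s' in Ioc 0 t, γ (s - s')) * F s :=
          lintegral_congr fun s => lintegral_mul_const _ (hγsub s)
      _ ≤ ∫⁻ s in Ioc 0 t, (∫⁻ u in Icc (-t) t, γ u) * F s :=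
          setLIntegral_mono (by fun_prop) fun s hs =>
            mul_le_mul_left (setLIntegral_Ioc_comp_sub_le hs.1.le hs.2) _
      _ = (∫⁻ u in Icc (-t) t, γ u) * ∫⁻ s in Ioc 0 t, F s := lintegral_const_mul _ hF
  have hhalf : (2 : ℝ≥0∞)⁻¹ ≠ ⊤ := ENNReal.inv_ne_top.2 two_ne_zero
  calc ∫⁻ s in Ioc 0 t, ∫⁻ s' in Ioc 0 t, γ (s - s') * ((F s + F s') / 2)
      = ((∫⁻ s in Ioc 0 t, ∫⁻ s' in Ioc 0 t, γ (s - s') * F s) +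
          ∫⁻ s in Ioc 0 t, ∫⁻ s' in Ioc 0 t, γ (s - s') * F s') / 2 := by
        have hmeas : Measurable fun s => ∫⁻ s' in Ioc 0 t, γ (s - s') * F s := by fun_prop
        simp only [div_eq_mul_inv]
        rw [← lintegral_add_left hmeas, ← lintegral_mul_const' _ _ hhalf]
        refine lintegral_congr fun s => ?_
        rw [← lintegral_add_left ((hγsub s).mul_const _), ← lintegral_mul_const' _ _ hhalf]
        simp only [mul_add, add_mul, mul_assoc]
    _ = ∫⁻ s in Ioc 0 t, ∫⁻ s' in Ioc 0 t, γ (s - s') * F s := by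
        rw [hswap]
        exact ENNReal.add_div.trans (ENNReal.add_halves _)
    _ ≤ _ := hA

lemma setLIntegral_Icc_neg_eq_ofReal (hγs : ∀ s, γ (-s) = γ s) {t : ℝ} (ht : 0 ≤ t)
    (hΓ : ∫⁻ u in Icc (-t) t, γ u < ⊤) :
    ∫⁻ u in Icc (-t) t, γ u = ENNReal.ofReal (2 * (∫⁻ u in Ioc 0 t, γ u).toReal) := by
  have hfin : ∫⁻ u in Ioc 0 t, γ u ≠ ⊤ :=
    ((lintegral_mono_set (Ioc_subset_Icc_self.trans (Icc_subset_Icc_left (by linarith)))).trans_lt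
      hΓ).ne
  rw [setLIntegral_Icc_neg_eq_two_mul hγs ht, ENNReal.ofReal_mul zero_le_two,
    ENNReal.ofReal_ofNat, ENNReal.ofReal_toReal hfin]

theorem integral_Ioc_integral_Ioc_toReal_mul_le (hγm : Measurable γ) (hγs : ∀ s, γ (-s) = γ s)
    {t : ℝ} (ht : 0 ≤ t) (hΓ : ∫⁻ u in Icc (-t) t, γ u < ⊤) {k : ℝ → ℝ → ℝ} {ψ : ℝ → ℝ}
    (hψm : Measurable ψ) (hψi : IntegrableOn ψ (Ioc 0 t)) (hψ0 : ∀ s, 0 ≤ ψ s)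
    (hk : ∀ s s', |k s s'| ≤ (ψ s + ψ s') / 2) :
    ∫ s in Ioc 0 t, ∫ s' in Ioc 0 t, (γ (s - s')).toReal * k s s' ≤
      2 * (∫⁻ u in Ioc 0 t, γ u).toReal * ∫ s in Ioc 0 t, ψ s := by
  have hΨ : ∫⁻ s in Ioc 0 t, ENNReal.ofReal (ψ s) = ENNReal.ofReal (∫ s in Ioc 0 t, ψ s) :=
    (ofReal_integral_eq_lintegral_ofReal hψi (.of_forall hψ0)).symm
  have hΨ0 : 0 ≤ ∫ s in Ioc 0 t, ψ s := integral_nonneg hψ0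
  have hbound := calc
    ‖∫ s in Ioc 0 t, ∫ s' in Ioc 0 t, (γ (s - s')).toReal * k s s'‖ₑ
      ≤ ∫⁻ s in Ioc 0 t, ∫⁻ s' in Ioc 0 t, ‖(γ (s - s')).toReal * k s s'‖ₑ :=
        (enorm_integral_le_lintegral_enorm _).trans
          (lintegral_mono fun _ => enorm_integral_le_lintegral_enorm _)
    _ ≤ ∫⁻ s in Ioc 0 t, ∫⁻ s' in Ioc 0 t,
          γ (s - s') * ((ENNReal.ofReal (ψ s) + ENNReal.ofReal (ψ s')) / 2) :=
        lintegral_mono fun s => lintegral_mono fun s' => by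
          rw [← ofReal_add_div_two (hψ0 s) (hψ0 s')]
          exact enorm_toReal_mul_le (hk s s')
    _ ≤ (∫⁻ u in Icc (-t) t, γ u) * ∫⁻ s in Ioc 0 t, ENNReal.ofReal (ψ s) :=
        setLIntegral_Ioc_mul_add_div_two_le hγm hγs (by fun_prop) t
    _ = ENNReal.ofReal (2 * (∫⁻ u in Ioc 0 t, γ u).toReal * ∫ s in Ioc 0 t, ψ s) := by
        rw [setLIntegral_Icc_neg_eq_ofReal hγs ht hΓ, hΨ, ← ENNReal.ofReal_mul (by positivity)]
  rw [Real.enorm_eq_ofReal_abs, ENNReal.ofReal_le_ofReal_iff (by positivity)] at hbound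
  exact (le_abs_self _).trans hbound

end Kernel

theorem stmt8 (γ : ℝ → ℝ≥0∞) (hγm : Measurable γ) (hγs : ∀ s : ℝ, γ (-s) = γ s)
    (hγloc : ∀ K : Set ℝ, IsCompact K → ∫⁻ s in K, γ s < ⊤)
    (μ : Measure ℝ) (hDalang : ∫⁻ ξ, ENNReal.ofReal (1 / (1 + ξ ^ 2)) ∂μ < ⊤)
    (t : ℝ) (ht : 0 < t) :
    (∀ s : ℝ, 0 ≤ s → MemLp (fun ξ => waveH s ξ) 2 μ) ∧
    (∫ s in (0 : ℝ)..t, ∫ s' in (0 : ℝ)..t,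
        (γ (s - s')).toReal * ∫ ξ, waveH s ξ * waveH s' ξ ∂μ) ≤
      (2 * (∫⁻ s in Set.Ioc (0 : ℝ) t, γ s).toReal) *
        ∫ s in (0 : ℝ)..t, ∫ ξ, waveH s ξ ^ 2 ∂μ := by
  refine ⟨fun s _ => memLp_waveH hDalang s, ?_⟩
  have hψ := continuous_integral_waveH_sq hDalang
  simp only [intervalIntegral.integral_of_le ht.le]
  exact integral_Ioc_integral_Ioc_toReal_mul_le hγm hγs ht.le (hγloc _ isCompact_Icc)
    hψ.measurable hψ.integrableOn_Ioc (fun s => integral_nonneg fun ξ => sq_nonneg _)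
    fun s s' => abs_integral_mul_le_half_add (memLp_waveH hDalang s) (memLp_waveH hDalang s')
end
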